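/- arXiv:2205.08392 — 9 statements merged into one kernel-verified Lean document; each statement's English description precedes it below -/
import Mathlib

section
/- The polynomial σ**(x^a) = sum of bi-unitary divisors of x^a splits into linear factors over F_2 if and only if a = 2 or a = 2^α − 1 for some α ≥ 1. -/
open Polynomial

/-- The sum of the bi-unitary divisors of `T ^ a`, for `T` irreducible. -/
noncomputable def sigmaStarStarPow (T : Polynomial (ZMod 2)) (a : ℕ) : Polynomial (ZMod 2) :=
  if a = 0 then 1
  else if Even a then
    (1 + T) * (∑ i ∈ Finset.range (a / 2 + 1), T ^ i) * (∑ i ∈ Finset.range (a / 2), T ^ i)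
  else ∑ i ∈ Finset.range (a + 1), T ^ i

/-!
Over `𝔽₂` the only possible root of `1 + X + ⋯ + X ^ (n - 1)` is `1`, so it splits iff it
equals `(X + 1) ^ (n - 1)`, i.e. iff `(X + 1) ^ n = X ^ n + 1`; taking out the largest
Frobenius power and comparing coefficients of `X` shows that this happens iff `n` is a power
of `2`. For odd `a` this applies to `σ**(X ^ a)` directly, and for `a = 2n` it asks that both
`n` and `n + 1` be powers of `2`.
-/

theorem Nat.two_pow_add_one_eq_two_pow_iff {j k : ℕ} : 2 ^ j + 1 = 2 ^ k ↔ j = 0 ∧ k = 1 := by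
  refine ⟨fun h ↦ ?_, fun ⟨hj, hk⟩ ↦ by rw [hj, hk]; rfl⟩
  rcases j with _ | j <;> rcases k with _ | k
  · simp at h
  · rw [pow_zero, pow_succ] at h
    exact ⟨rfl, by simpa using (Nat.pow_eq_one.1 (by omega : 2 ^ k = 1))⟩
  · simp at h
  · rw [pow_succ, pow_succ] at h
    omega

namespace Polynomial

theorem Splits.eq_X_sub_C_pow {R : Type*} [CommRing R] [IsDomain R] {f : R[X]} {r : R}
    (hf : f.Splits) (hm : f.Monic) (hr : ∀ x ∈ f.roots, x = r) :
    f = (X - C r) ^ f.natDegree := by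
  have hroots : f.roots = Multiset.replicate f.natDegree r :=
    Multiset.eq_replicate.2 ⟨hf.natDegree_eq_card_roots.symm, hr⟩
  conv_lhs => rw [hf.eq_prod_roots_of_monic hm, hroots]
  simp [Multiset.map_replicate, Multiset.prod_replicate]

theorem X_add_one_pow_eq_X_pow_add_one_iff {R : Type*} [CommRing R] [IsDomain R] (p : ℕ)
    [Fact p.Prime] [CharP R p] {n : ℕ} :
    (X + 1 : R[X]) ^ n = X ^ n + 1 ↔ ∃ k, n = p ^ k := by
  refine ⟨fun h ↦ ?_, fun ⟨k, hk⟩ ↦ by rw [hk, add_pow_char_pow, one_pow]⟩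
  have hn : n ≠ 0 := by
    rintro rfl
    simp at h
  obtain ⟨k, m, hpm, rfl⟩ := Nat.exists_eq_pow_mul_and_not_dvd hn p (Fact.out : p.Prime).ne_one
  -- Frobenius is injective on the reduced ring `R[X]`, so the identity descends to `m`.
  have hm : (X + 1 : R[X]) ^ m = X ^ m + 1 := by
    apply iterateFrobenius_inj R[X] p k
    simp only [iterateFrobenius_def, add_pow_char_pow, one_pow, ← pow_mul]
    rwa [mul_comm]
  refine ⟨k, ?_⟩
  by_contra hm1
  have hm1 : m ≠ 1 := fun h ↦ hm1 (by rw [h, mul_one])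
  have hcoeff := congrArg (coeff · 1) hm
  simp only [coeff_X_add_one_pow, Nat.choose_one_right, coeff_add, coeff_X_pow, coeff_one,
    if_neg (Ne.symm hm1), one_ne_zero, if_false, add_zero] at hcoeff
  exact hpm ((CharP.cast_eq_zero_iff R p m).1 hcoeff)

theorem splits_X_pow_add_one_iff {n : ℕ} (hn : n ≠ 0) :
    (X ^ n + 1 : (ZMod 2)[X]).Splits ↔ ∃ k, n = 2 ^ k := by
  rw [← X_add_one_pow_eq_X_pow_add_one_iff (R := ZMod 2) 2]
  refine ⟨fun hs ↦ ?_, fun h ↦ h ▸ (Splits.X_add_C 1).pow n⟩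
  have hroots : ∀ x ∈ (X ^ n + 1 : (ZMod 2)[X]).roots, x = 1 := by
    intro x hx
    have hx0 : x ^ n + 1 = 0 := by simpa using isRoot_of_mem_roots hx
    rcases (by decide : ∀ y : ZMod 2, y = 0 ∨ y = 1) x with rfl | rfl
    · simp [hn] at hx0
    · rfl
  have hdeg : (X ^ n + 1 : (ZMod 2)[X]).natDegree = n := by
    simpa using natDegree_X_pow_add_C (n := n) (r := (1 : ZMod 2))
  rw [hs.eq_X_sub_C_pow (monic_X_pow_add_C 1 hn) hroots, hdeg]
  simp [CharTwo.sub_eq_add]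

theorem splits_geom_sum_X_iff {n : ℕ} (hn : n ≠ 0) :
    (∑ i ∈ Finset.range n, (X : (ZMod 2)[X]) ^ i).Splits ↔ ∃ k, n = 2 ^ k := by
  have hmul : (∑ i ∈ Finset.range n, (X : (ZMod 2)[X]) ^ i) * (X + 1) = X ^ n + 1 := by
    simpa [CharTwo.sub_eq_add] using geom_sum_mul (X : (ZMod 2)[X]) n
  rw [← splits_X_pow_add_one_iff hn, ← hmul, ← C_1,
    splits_mul_iff_left (X_add_C_ne_zero 1) (Splits.X_add_C 1)]

end Polynomial

theorem splits_sigmaStarStarPow_X_two_mul {n : ℕ} (hn : n ≠ 0) :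
    (sigmaStarStarPow X (2 * n)).Splits ↔ n = 1 := by
  have hgeom {m : ℕ} (hm : m ≠ 0) : (∑ i ∈ Finset.range m, (X : (ZMod 2)[X]) ^ i) ≠ 0 :=
    (monic_geom_sum_X hm).ne_zero
  have hX : (1 + X : (ZMod 2)[X]) ≠ 0 := by simpa [add_comm] using X_add_C_ne_zero (1 : ZMod 2)
  rw [sigmaStarStarPow, if_neg (by omega), if_pos (even_two_mul n),
    Nat.mul_div_cancel_left n two_pos,
    splits_mul (mul_ne_zero hX (hgeom n.succ_ne_zero)) (hgeom hn),
    splits_mul hX (hgeom n.succ_ne_zero), splits_geom_sum_X_iff n.succ_ne_zero,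
    splits_geom_sum_X_iff hn]
  constructor
  · rintro ⟨⟨-, k, hk⟩, j, rfl⟩
    rw [(Nat.two_pow_add_one_eq_two_pow_iff.1 hk).1, pow_zero]
  · rintro rfl
    exact ⟨⟨by simpa [add_comm] using Splits.X_add_C (1 : ZMod 2), 1, rfl⟩, 0, rfl⟩

theorem splits_sigmaStarStarPow_X_two_mul_add_one (n : ℕ) :
    (sigmaStarStarPow X (2 * n + 1)).Splits ↔ ∃ k, 2 * n + 2 = 2 ^ k := by
  rw [sigmaStarStarPow, if_neg (by omega), if_neg (Nat.not_even_two_mul_add_one n)]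
  exact splits_geom_sum_X_iff (by omega)

theorem sigmaStarStarPow_X_splits_iff (a : ℕ) (ha : 1 ≤ a) :
    ((sigmaStarStarPow (X : Polynomial (ZMod 2)) a).map (RingHom.id (ZMod 2))).Splits ↔
      a = 2 ∨ ∃ α : ℕ, 1 ≤ α ∧ a = 2 ^ α - 1 := by
  rw [map_id]
  obtain ⟨n, rfl | rfl⟩ := a.even_or_odd'
  · rw [splits_sigmaStarStarPow_X_two_mul (by omega)]
    refine ⟨fun h ↦ Or.inl (by omega), ?_⟩
    rintro (h | ⟨α, hα, h⟩)
    · omega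
    · -- `2 ^ α - 1` is odd
      obtain ⟨β, rfl⟩ := Nat.exists_eq_add_of_le' hα
      rw [pow_succ] at h
      omega
  · rw [splits_sigmaStarStarPow_X_two_mul_add_one]
    constructor
    · rintro ⟨_ | k, hk⟩
      · simp at hk
      · exact Or.inr ⟨k + 1, k.succ_pos, by omega⟩
    · rintro (h | ⟨α, -, h⟩)
      · omega
      · exact ⟨α, by have := Nat.one_le_two_pow (n := α); omega⟩
end

section
/- If A ∈ F_2[x] is a nonconstant polynomial with σ**(A) = A (bi-unitary perfect), then x(x+1) divides A; in particular A has at least two distinct irreducible factors. -/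
open Polynomial

open scoped Classical in
/-- `σ**`, the multiplicative function determined by `sigmaStarStarPow` on
prime powers, applied to the factorization of `A`. -/
noncomputable def sigmaStarStar (A : Polynomial (ZMod 2)) : Polynomial (ZMod 2) :=
  ∏ p ∈ (UniqueFactorizationMonoid.normalizedFactors A).toFinset,
    sigmaStarStarPow p ((UniqueFactorizationMonoid.normalizedFactors A).count p)

/-!
Every value `σ**(T^a)` with `a ≠ 0` is divisible by `T + 1`. Hence, if `A` is bi-unitary perfect
and `T` is an irreducible factor of `A`, then `T + 1 ∣ σ**(A) = A`, and since `T` and `T + 1` are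
coprime, `T (T + 1) ∣ A`. Over `𝔽₂` the polynomial `T (T + 1)` vanishes at `0` and at `1`, so
`X (X + 1) ∣ T (T + 1) ∣ A`.
-/

open UniqueFactorizationMonoid

theorem isCoprime_self_add_one {R : Type*} [CommRing R] (x : R) : IsCoprime x (x + 1) :=
  ⟨-1, 1, by ring⟩

theorem add_one_dvd_geom_sum_of_even {R : Type*} [CommSemiring R] (x : R) {n : ℕ}
    (hn : Even n) : x + 1 ∣ ∑ i ∈ Finset.range n, x ^ i := by
  obtain ⟨m, rfl⟩ := hn
  induction m with
  | zero => simp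
  | succ m ih =>
    rw [show m + 1 + (m + 1) = m + m + 1 + 1 by ring, Finset.sum_range_succ,
      Finset.sum_range_succ, add_assoc]
    exact dvd_add ih (Dvd.intro_left (x ^ (m + m)) (by ring))

theorem add_one_dvd_sigmaStarStarPow (T : (ZMod 2)[X]) {a : ℕ} (ha : a ≠ 0) :
    T + 1 ∣ sigmaStarStarPow T a := by
  rw [sigmaStarStarPow, if_neg ha]
  split_ifs with he
  · rw [add_comm 1 T, mul_assoc]
    exact dvd_mul_right _ _
  · exact add_one_dvd_geom_sum_of_even T (Nat.not_even_iff_odd.mp he).add_one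

theorem add_one_dvd_of_mem_normalizedFactors {A T : (ZMod 2)[X]}
    (hperf : sigmaStarStar A = A) (hT : T ∈ normalizedFactors A) : T + 1 ∣ A := by
  rw [← hperf]
  exact (add_one_dvd_sigmaStarStarPow T (Multiset.count_ne_zero.mpr hT)).trans
    (Finset.dvd_prod_of_mem _ (Multiset.mem_toFinset.mpr hT))

theorem X_mul_X_add_one_dvd_mul_add_one (T : (ZMod 2)[X]) : X * (X + 1) ∣ T * (T + 1) := by
  have hroot (c : ZMod 2) : X - C c ∣ T * (T + 1) := by
    rw [dvd_iff_isRoot, IsRoot, eval_mul, eval_add, eval_one]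
    generalize T.eval c = t
    revert t
    decide
  have hX1 : (X + 1 : (ZMod 2)[X]) = X - C 1 := by rw [map_one, CharTwo.sub_eq_add]
  exact (isCoprime_self_add_one X).mul_dvd (by simpa using hroot 0) (hX1 ▸ hroot 1)

theorem x_mul_x_add_one_dvd_of_biunitary_perfect (A : Polynomial (ZMod 2))
    (hA : 0 < A.degree) (hperf : sigmaStarStar A = A) :
    (X * (X + 1) : Polynomial (ZMod 2)) ∣ A ∧
      2 ≤ (UniqueFactorizationMonoid.normalizedFactors A).toFinset.card := by
  have hA0 : A ≠ 0 := ne_zero_of_degree_gt hA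
  have hAu : ¬IsUnit A := fun hu => (degree_eq_zero_of_isUnit hu ▸ hA).false
  obtain ⟨T, hT⟩ := exists_mem_normalizedFactors hA0 hAu
  have hdvd : X * (X + 1) ∣ A := (X_mul_X_add_one_dvd_mul_add_one T).trans <|
    (isCoprime_self_add_one T).mul_dvd (dvd_of_mem_normalizedFactors hT)
      (add_one_dvd_of_mem_normalizedFactors hperf hT)
  refine ⟨hdvd, Finset.one_lt_card.mpr ⟨X, ?_, X + 1, ?_, ?_⟩⟩
  · rw [Multiset.mem_toFinset, Polynomial.mem_normalizedFactors_iff hA0]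
    exact ⟨irreducible_X, monic_X, dvd_of_mul_right_dvd hdvd⟩
  · rw [Multiset.mem_toFinset, Polynomial.mem_normalizedFactors_iff hA0]
    exact ⟨irreducible_of_degree_eq_one (degree_X_add_C 1), monic_X_add_C 1,
      dvd_of_mul_left_dvd hdvd⟩
  · simp
end

section
/- If A = A₁A₂ ∈ F_2[x] is bi-unitary perfect with gcd(A₁, A₂) = 1, then A₁ is bi-unitary perfect if and only if A₂ is bi-unitary perfect. -/
open Polynomial

open UniqueFactorizationMonoid

theorem Multiset.prod_toFinset_count_add_of_disjoint {α β : Type*} [DecidableEq α] [CommMonoid β]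
    (f : α → ℕ → β) {s t : Multiset α} (hst : Disjoint s t) :
    ∏ p ∈ (s + t).toFinset, f p ((s + t).count p) =
      (∏ p ∈ s.toFinset, f p (s.count p)) * ∏ p ∈ t.toFinset, f p (t.count p) := by
  have hdisj : Disjoint s.toFinset t.toFinset := Multiset.disjoint_toFinset.mpr hst
  rw [Multiset.toFinset_add, Finset.prod_union hdisj]
  congr 1 <;> refine Finset.prod_congr rfl fun p hp => ?_ <;> rw [Multiset.count_add]
  · rw [Multiset.count_eq_zero_of_notMem (Multiset.disjoint_left.mp hst (by simpa using hp)),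
      add_zero]
  · rw [Multiset.count_eq_zero_of_notMem (Multiset.disjoint_right.mp hst (by simpa using hp)),
      zero_add]

theorem prod_normalizedFactors_count_mul_of_isRelPrime {α β : Type*}
    [CommMonoidWithZero α] [NormalizationMonoid α] [UniqueFactorizationMonoid α]
    [DecidableEq α] [CommMonoid β] (f : α → ℕ → β) {a b : α} (ha : a ≠ 0) (hb : b ≠ 0)
    (hab : IsRelPrime a b) :
    ∏ p ∈ (normalizedFactors (a * b)).toFinset, f p ((normalizedFactors (a * b)).count p) =
      (∏ p ∈ (normalizedFactors a).toFinset, f p ((normalizedFactors a).count p)) *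
        ∏ p ∈ (normalizedFactors b).toFinset, f p ((normalizedFactors b).count p) := by
  rw [normalizedFactors_mul ha hb]
  exact Multiset.prod_toFinset_count_add_of_disjoint f (disjoint_normalizedFactors hab)

theorem sigmaStarStar_zero : sigmaStarStar 0 = 1 := by
  simp [sigmaStarStar, normalizedFactors_zero]

theorem sigmaStarStar_mul_of_isCoprime {A₁ A₂ : Polynomial (ZMod 2)} (h₁ : A₁ ≠ 0) (h₂ : A₂ ≠ 0)
    (hcop : IsCoprime A₁ A₂) :
    sigmaStarStar (A₁ * A₂) = sigmaStarStar A₁ * sigmaStarStar A₂ :=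
  prod_normalizedFactors_count_mul_of_isRelPrime _ h₁ h₂ hcop.isRelPrime

theorem biunitary_perfect_iff_of_coprime_mul (A A₁ A₂ : Polynomial (ZMod 2))
    (hA : A = A₁ * A₂) (hcop : IsCoprime A₁ A₂) (hperf : sigmaStarStar A = A) :
    sigmaStarStar A₁ = A₁ ↔ sigmaStarStar A₂ = A₂ := by
  have hA0 : A ≠ 0 := by
    rintro rfl
    simp [sigmaStarStar_zero] at hperf
  subst hA
  obtain ⟨h₁, h₂⟩ := mul_ne_zero_iff.mp hA0
  have hmul : sigmaStarStar A₁ * sigmaStarStar A₂ = A₁ * A₂ := by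
    rw [← sigmaStarStar_mul_of_isCoprime h₁ h₂ hcop, hperf]
  constructor
  · intro h
    rw [h] at hmul
    exact mul_left_cancel₀ h₁ hmul
  · intro h
    rw [h] at hmul
    exact mul_right_cancel₀ h₂ hmul
end

section
/- If P is an irreducible polynomial over F_2 of the form 1 + x^a(x+1)^b (a Mersenne prime polynomial) satisfying P = P*, where P* is the reciprocal polynomial x^{deg P}·P(1/x), then P = 1+x+x^2 or P = 1+x+x^2+x^3+x^4. -/
/-!
Over `𝔽₂`, self-reciprocity of `P = 1 + X^a (X+1)^b` amounts to
`(X^a + 1) (X+1)^b = X^(a+b) + 1`. Since `(X+1)^2` divides the left side, `X^(a+b) - 1` is not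
separable, so `a + b` is even. If `a` and `b` are both even, `P` is a square; otherwise comparing
coefficients of `X` forces `a = 1`, so `(X+1)^(b+1) = X^(b+1) + 1` and `b + 1 = 2^u`. Then `P`
divides `P (X+1) = X^(2^u+1) + 1`, hence `X^(2^(2u)) - X`, so `deg P = 2^u` divides `2u`, which
leaves `u ∈ {1, 2}`.
-/

open Polynomial

section Reverse

variable {R : Type*} [Semiring R] [Nontrivial R]

lemma reverse_X_add_one_pow (b : ℕ) : ((X + 1 : R[X]) ^ b).reverse = (X + 1) ^ b := by
  have hmonic : (X + 1 : R[X]).Monic := monic_X_add_C 1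
  have h1 : (1 : R[X]).reverse = 1 := by simpa using reverse_C (1 : R)
  have h : (X + 1 : R[X]).reverse = X + 1 := by
    have := reverse_add_C (X : R[X]) 1
    rwa [C_1, natDegree_X, pow_one, one_mul, ← mul_one X, reverse_X_mul, h1, mul_one,
      add_comm 1 X] at this
  induction b with
  | zero => exact h1
  | succ b ih =>
    rw [pow_succ, reverse_mul (by simp [(hmonic.pow b).leadingCoeff, hmonic.leadingCoeff]), ih, h]

lemma natDegree_X_pow_mul_X_add_one_pow (a b : ℕ) :
    (X ^ a * (X + 1) ^ b : R[X]).natDegree = a + b := by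
  have hmonic : (X + 1 : R[X]).Monic := monic_X_add_C 1
  rw [(monic_X_pow a).natDegree_mul (hmonic.pow b), hmonic.natDegree_pow, natDegree_X_pow, ← C_1,
    natDegree_X_add_C, mul_one]

lemma natDegree_one_add_X_pow_mul_X_add_one_pow {a : ℕ} (ha : a ≠ 0) (b : ℕ) :
    (1 + X ^ a * (X + 1) ^ b : R[X]).natDegree = a + b := by
  have hQ := natDegree_X_pow_mul_X_add_one_pow (R := R) a b
  rw [natDegree_add_eq_right_of_natDegree_lt (by rw [natDegree_one, hQ]; omega), hQ]

lemma reverse_one_add_X_pow_mul_X_add_one_pow (a b : ℕ) :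
    (1 + X ^ a * (X + 1) ^ b : R[X]).reverse = X ^ (a + b) + (X + 1) ^ b := by
  have := reverse_C_add (X ^ a * (X + 1) ^ b : R[X]) 1
  rwa [C_1, one_mul, natDegree_X_pow_mul_X_add_one_pow, reverse_X_pow_mul,
    reverse_X_add_one_pow] at this

end Reverse

lemma natCast_eq_zero_of_X_sub_C_sq_dvd_X_pow_sub_one {F : Type*} [Field F] {c : F} {n : ℕ}
    (h : (X - C c) ^ 2 ∣ X ^ n - 1) : (n : F) = 0 := by
  by_contra hn
  have hsq := (X_pow_sub_one_separable_iff.mpr hn).squarefree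
  exact not_isUnit_X_sub_C c (hsq _ (sq (X - C c) ▸ h))

section CharTwo

variable {R : Type*} [CommRing R] [CharP R 2]

lemma X_pow_add_one_mul_X_add_one_pow_eq_of_reverse_eq [Nontrivial R] {a b : ℕ}
    (h : (1 + X ^ a * (X + 1) ^ b : R[X]).reverse = 1 + X ^ a * (X + 1) ^ b) :
    (X ^ a + 1) * (X + 1) ^ b = (X ^ (a + b) + 1 : R[X]) := by
  rw [reverse_one_add_X_pow_mul_X_add_one_pow] at h
  linear_combination -h + ((X + 1) ^ b - 1) * (CharTwo.two_eq_zero : (2 : R[X]) = 0)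

lemma even_add_of_X_pow_add_one_mul_X_add_one_pow_eq {F : Type*} [Field F] [CharP F 2]
    {a b : ℕ} (hb : b ≠ 0) (h : (X ^ a + 1) * (X + 1) ^ b = (X ^ (a + b) + 1 : F[X])) :
    Even (a + b) := by
  have hsq : (X - C 1) ^ 2 ∣ (X ^ (a + b) - 1 : F[X]) := by
    rw [CharTwo.sub_eq_add, CharTwo.sub_eq_add, C_1, ← h, sq]
    refine mul_dvd_mul ?_ (dvd_pow_self _ hb)
    simpa only [CharTwo.sub_eq_add] using sub_one_dvd_pow_sub_one (X : F[X]) a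
  exact even_iff_two_dvd.mpr
    ((CharP.cast_eq_zero_iff F 2 _).mp (natCast_eq_zero_of_X_sub_C_sq_dvd_X_pow_sub_one hsq))

lemma not_irreducible_one_add_X_pow_mul_X_add_one_pow {a b : ℕ} (ha : Even a) (hb : Even b) :
    ¬ Irreducible (1 + X ^ a * (X + 1) ^ b : R[X]) := by
  obtain ⟨k, rfl⟩ := ha
  obtain ⟨l, rfl⟩ := hb
  have hsq : (1 + X ^ (k + k) * (X + 1) ^ (l + l) : R[X]) = (1 + X ^ k * (X + 1) ^ l) ^ 2 := by
    rw [CharTwo.add_sq]; ring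
  rw [hsq]
  exact not_irreducible_pow (by norm_num)

lemma le_one_of_X_pow_add_one_mul_X_add_one_pow_eq [Nontrivial R] {a b : ℕ} (hb : Odd b)
    (h : (X ^ a + 1) * (X + 1) ^ b = (X ^ (a + b) + 1 : R[X])) : a ≤ 1 := by
  by_contra! ha
  have h1 := congrArg (coeff · 1) h
  simp only [add_mul, one_mul, coeff_add, coeff_X_pow_mul', coeff_X_pow, coeff_X_add_one_pow,
    coeff_one, Nat.choose_one_right] at h1
  rw [if_neg (by omega), if_neg (by omega), if_neg one_ne_zero, zero_add, add_zero,
    CharP.cast_eq_zero_iff R 2] at h1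
  exact hb.not_two_dvd_nat h1

end CharTwo

lemma exists_eq_pow_of_X_add_one_pow_eq {R : Type*} [CommRing R] [IsDomain R] (p : ℕ)
    [Fact p.Prime] [CharP R p] {n : ℕ} (hn : n ≠ 0) (h : (X + 1 : R[X]) ^ n = X ^ n + 1) :
    ∃ k, n = p ^ k := by
  induction n using Nat.strong_induction_on with
  | _ n ih =>
  by_cases hp : p ∣ n
  · obtain ⟨m, rfl⟩ := hp
    have hm : (X + 1 : R[X]) ^ m = X ^ m + 1 := by
      apply frobenius_inj R[X] p
      rwa [frobenius_def, frobenius_def, add_pow_char (p := p), one_pow, ← pow_mul, ← pow_mul,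
        mul_comm m]
    have hm0 : m ≠ 0 := right_ne_zero_of_mul hn
    have hlt : m < p * m := lt_mul_left (Nat.pos_of_ne_zero hm0) (Fact.out : p.Prime).one_lt
    obtain ⟨k, rfl⟩ := ih m hlt hm0 hm
    exact ⟨k + 1, by ring⟩
  · rcases eq_or_ne n 1 with rfl | hn1
    · exact ⟨0, rfl⟩
    · have h1 := congrArg (coeff · 1) h
      simp only [coeff_X_add_one_pow, coeff_add, coeff_X_pow, coeff_one, Nat.choose_one_right] at h1
      rw [if_neg (Ne.symm hn1), if_neg one_ne_zero, add_zero, CharP.cast_eq_zero_iff R p] at h1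
      exact absurd h1 hp

lemma pow_succ_sub_one_dvd_pow_sq_sub_self {R : Type*} [CommRing R] (x : R) (q : ℕ) :
    x ^ (q + 1) - 1 ∣ x ^ (q ^ 2) - x := by
  cases q with
  | zero => simpa using ⟨-1, by ring⟩
  | succ m =>
    have : x ^ ((m + 1) ^ 2) - x = x * (x ^ ((m + 1 + 1) * m) - 1) := by ring
    rw [this]
    exact (pow_one_sub_dvd_pow_mul_sub_one x _ _).mul_left x

theorem Irreducible.natDegree_dvd_two_mul_of_dvd_X_pow_card_pow_add_one_sub_one {k : Type*}
    [Field k] {f : k[X]} (hf : Irreducible f) {m : ℕ} (h : f ∣ X ^ (Nat.card k ^ m + 1) - 1) :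
    f.natDegree ∣ 2 * m :=
  hf.natDegree_dvd_of_dvd_X_pow_card_pow_sub_X <| h.trans <| by
    rw [show Nat.card k ^ (2 * m) = (Nat.card k ^ m) ^ 2 by ring]
    exact pow_succ_sub_one_dvd_pow_sq_sub_self (X : k[X]) _

lemma le_two_of_two_pow_dvd_two_mul {u : ℕ} (h : 2 ^ u ∣ 2 * u) : u ≤ 2 := by
  by_contra! hu
  obtain ⟨v, rfl⟩ : ∃ v, u = v + 3 := ⟨u - 3, by omega⟩
  have hle := Nat.le_of_dvd (by omega) h
  have hlt := Nat.lt_two_pow_self (n := v)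
  rw [pow_add] at hle
  omega

theorem mersenne_self_reciprocal (P : Polynomial (ZMod 2)) (hP : Irreducible P)
    (hM : ∃ a b : ℕ, 1 ≤ a ∧ 1 ≤ b ∧ P = 1 + X ^ a * (X + 1) ^ b)
    (hrec : P.reverse = P) :
    P = 1 + X + X ^ 2 ∨ P = 1 + X + X ^ 2 + X ^ 3 + X ^ 4 := by
  obtain ⟨a, b, ha, hb, rfl⟩ := hM
  have h2 : (2 : (ZMod 2)[X]) = 0 := CharTwo.two_eq_zero
  have hkey := X_pow_add_one_mul_X_add_one_pow_eq_of_reverse_eq hrec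
  have heven := even_add_of_X_pow_add_one_mul_X_add_one_pow_eq (by omega) hkey
  have hb_odd : Odd b := by
    by_contra hb_even
    rw [Nat.not_odd_iff_even] at hb_even
    exact not_irreducible_one_add_X_pow_mul_X_add_one_pow
      ((Nat.even_add.mp heven).mpr hb_even) hb_even hP
  obtain rfl : a = 1 := le_antisymm (le_one_of_X_pow_add_one_mul_X_add_one_pow_eq hb_odd hkey) ha
  obtain ⟨u, hu⟩ := exists_eq_pow_of_X_add_one_pow_eq 2 (n := 1 + b) (by omega)
    (by rw [pow_add, pow_one]; linear_combination hkey)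
  have hdvd : 1 + X ^ 1 * (X + 1) ^ b ∣ (X ^ (Nat.card (ZMod 2) ^ u + 1) - 1 : (ZMod 2)[X]) :=
    Dvd.intro (X + 1) <| by
      rw [Nat.card_zmod, ← hu, CharTwo.sub_eq_add]
      linear_combination X * hkey + X * h2
  have hdeg := hP.natDegree_dvd_two_mul_of_dvd_X_pow_card_pow_add_one_sub_one hdvd
  rw [natDegree_one_add_X_pow_mul_X_add_one_pow one_ne_zero, hu] at hdeg
  have hu2 := le_two_of_two_pow_dvd_two_mul hdeg
  interval_cases u
  · omega
  · obtain rfl : b = 1 := by omega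
    left; ring
  · obtain rfl : b = 3 := by omega
    right; linear_combination (X ^ 3 + X ^ 2) * h2
end

section
/- For n ∈ ℕ*, if 1 + x + ... + x^n = 1 + (x+1) + ... + (x+1)^n in F_2[x], then n = 2^h − 2 for some h ≥ 1. -/
open Polynomial

/-! Multiplying the two geometric sums by `X` and `X + 1` turns the hypothesis into
`(X + 1)^(n+2) = X^(n+2) + 1`. Writing `n + 2 = 2^k q` with `q` odd, injectivity of the
`2^k`-th power Frobenius reduces this to `(X + 1)^q = X^q + 1`, whose coefficient of
`X^(q-1)` forces `q = 1`. -/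

theorem eq_one_of_add_one_pow_eq_of_not_dvd {R : Type*} [Semiring R] (p : ℕ) [CharP R p]
    {q : ℕ} (hq : ¬ p ∣ q) (h : (X + 1 : R[X]) ^ q = X ^ q + 1) : q = 1 := by
  have hq0 : q ≠ 0 := by rintro rfl; exact hq (dvd_zero p)
  by_contra hq1
  have hcoeff := congrArg (coeff · (q - 1)) h
  simp only [coeff_X_add_one_pow, coeff_add, coeff_X_pow, coeff_one,
    if_neg (by omega : q - 1 ≠ q), if_neg (by omega : q - 1 ≠ 0), add_zero,
    Nat.choose_symm (by omega : 1 ≤ q), Nat.choose_one_right] at hcoeff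
  exact hq ((CharP.cast_eq_zero_iff R p q).mp hcoeff)

theorem exists_eq_pow_of_add_one_pow_eq {R : Type*} [CommRing R] [IsDomain R] (p : ℕ)
    [Fact p.Prime] [CharP R p] {m : ℕ} (h : (X + 1 : R[X]) ^ m = X ^ m + 1) :
    ∃ k, m = p ^ k := by
  have hp : p.Prime := Fact.out
  rcases eq_or_ne m 0 with rfl | hm
  · have := CharP.nontrivial_of_char_ne_one (R := R) hp.ne_one
    simp at h
  obtain ⟨k, q, hq, rfl⟩ := Nat.exists_eq_pow_mul_and_not_dvd hm p hp.ne_one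
  have hfrob :
      iterateFrobenius R[X] p k ((X + 1) ^ q) = iterateFrobenius R[X] p k (X ^ q + 1) := by
    simp only [iterateFrobenius_def, ← pow_mul, add_pow_char_pow, one_pow]
    rw [mul_comm, h]
  have hq1 := eq_one_of_add_one_pow_eq_of_not_dvd p hq (iterateFrobenius_inj R[X] p k hfrob)
  exact ⟨k, by rw [hq1, mul_one]⟩

theorem add_one_pow_add_two_eq_of_geom_sum_eq {R : Type*} [CommRing R] [CharP R 2] {n : ℕ}
    (h : ∑ i ∈ Finset.range (n + 1), (X : R[X]) ^ i =
      ∑ i ∈ Finset.range (n + 1), (X + 1 : R[X]) ^ i) :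
    (X + 1 : R[X]) ^ (n + 2) = X ^ (n + 2) + 1 := by
  have hX := geom_sum_mul (X : R[X]) (n + 1)
  have hX1 := geom_sum_mul (X + 1 : R[X]) (n + 1)
  rw [← h] at hX1
  linear_combination X * hX - (X + 1) * hX1 +
    (∑ i ∈ Finset.range (n + 1), (X : R[X]) ^ i) * X * (CharTwo.two_eq_zero : (2 : R[X]) = 0)

theorem sigma_eq_sigma_shift_general (n : ℕ)
    (h : (∑ i ∈ Finset.range (n + 1), (X : Polynomial (ZMod 2)) ^ i) =
      ∑ i ∈ Finset.range (n + 1), ((X : Polynomial (ZMod 2)) + 1) ^ i) :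
    ∃ h' : ℕ, 1 ≤ h' ∧ n = 2 ^ h' - 2 := by
  obtain ⟨k, hk⟩ := exists_eq_pow_of_add_one_pow_eq 2 (add_one_pow_add_two_eq_of_geom_sum_eq h)
  rcases k with _ | k
  · simp at hk
  · exact ⟨k + 1, by omega, by omega⟩

theorem sigma_eq_sigma_shift (n : ℕ) (hn : 1 ≤ n)
    (h : (∑ i ∈ Finset.range (n + 1), (X : Polynomial (ZMod 2)) ^ i) =
      ∑ i ∈ Finset.range (n + 1), ((X : Polynomial (ZMod 2)) + 1) ^ i) :
    ∃ h' : ℕ, 1 ≤ h' ∧ n = 2 ^ h' - 2 :=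
  sigma_eq_sigma_shift_general n h
end

section
/- For any m ≥ 1 and any Mersenne prime polynomial M over F_2, the polynomials σ(x^{2m}), σ((x+1)^{2m}), and σ(M^{2m}) are odd (coprime to x(x+1)) and squarefree. -/
/-!
In characteristic 2, `σ(P^(2m)) = 1 + P (P + 1) σ(P^(m-1))^2`. Hence `σ(P^(2m))` is coprime
to every divisor of `P (P + 1)`, and its derivative is `P' σ(P^(m-1))^2`, so it is separable as
soon as `P'` divides `P (P + 1)`. For `P = X` and `P = X + 1` we have `P' = 1`. For a Mersenne
prime `M = 1 + X^a (X + 1)^b`, irreducibility over the perfect field `𝔽₂` gives `M' ≠ 0`, so `a`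
or `b` is odd, and then `M'` divides `M + 1 = X^a (X + 1)^b`.
-/

open Polynomial Finset

section CharTwo

variable {R : Type*} [CommRing R] [CharP R 2]

theorem geom_sum_two_mul_add_one_eq (P : R) (m : ℕ) :
    ∑ i ∈ range (2 * m + 1), P ^ i = P * (P + 1) * (∑ i ∈ range m, P ^ i) ^ 2 + 1 := by
  induction m with
  | zero => simp
  | succ m ih =>
    rw [show 2 * (m + 1) + 1 = 2 * m + 1 + 1 + 1 by ring, sum_range_succ, sum_range_succ, ih,
      sum_range_succ, CharTwo.add_sq]
    ring

theorem isCoprime_geom_sum_two_mul_add_one (P : R) (m : ℕ) :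
    IsCoprime (∑ i ∈ range (2 * m + 1), P ^ i) (P * (P + 1)) :=
  ⟨1, -(∑ i ∈ range m, P ^ i) ^ 2, by rw [geom_sum_two_mul_add_one_eq]; ring⟩

theorem derivative_geom_sum_two_mul_add_one (P : R[X]) (m : ℕ) :
    derivative (∑ i ∈ range (2 * m + 1), P ^ i)
      = derivative P * (∑ i ∈ range m, P ^ i) ^ 2 := by
  rw [geom_sum_two_mul_add_one_eq]
  simp only [derivative_add, derivative_mul, derivative_one, derivative_sq, map_ofNat]
  linear_combination (derivative P * P * (∑ i ∈ range m, P ^ i) ^ 2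
    + P * (P + 1) * (∑ i ∈ range m, P ^ i) * derivative (∑ i ∈ range m, P ^ i))
    * CharTwo.two_eq_zero (R := R[X])

theorem separable_geom_sum_two_mul_add_one {P : R[X]} (m : ℕ)
    (h : IsCoprime (∑ i ∈ range (2 * m + 1), P ^ i) (derivative P)) :
    (∑ i ∈ range (2 * m + 1), P ^ i).Separable := by
  have hS : IsCoprime (∑ i ∈ range (2 * m + 1), P ^ i) ((∑ i ∈ range m, P ^ i) ^ 2) :=
    ⟨1, -(P * (P + 1)), by rw [geom_sum_two_mul_add_one_eq]; ring⟩
  rw [Polynomial.Separable, derivative_geom_sum_two_mul_add_one]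
  exact h.mul_right hS

theorem isCoprime_and_squarefree_geom_sum_two_mul_add_one {P Q : R[X]} (m : ℕ)
    (hQ : Q ∣ P * (P + 1)) (hP : derivative P ∣ P * (P + 1)) :
    IsCoprime (∑ i ∈ range (2 * m + 1), P ^ i) Q ∧
      Squarefree (∑ i ∈ range (2 * m + 1), P ^ i) := by
  have h := isCoprime_geom_sum_two_mul_add_one P m
  exact ⟨h.of_isCoprime_of_dvd_right hQ,
    (separable_geom_sum_two_mul_add_one m (h.of_isCoprime_of_dvd_right hP)).squarefree⟩

end CharTwo

theorem derivative_one_add_X_pow_mul_dvd {a b : ℕ}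
    (hirr : Irreducible (1 + X ^ a * (X + 1) ^ b : (ZMod 2)[X])) :
    derivative (1 + X ^ a * (X + 1) ^ b : (ZMod 2)[X]) ∣ X ^ a * (X + 1) ^ b := by
  have hne := (separable_iff_derivative_ne_zero hirr).mp
    (PerfectField.separable_of_irreducible hirr)
  have hD : derivative (1 + X ^ a * (X + 1) ^ b : (ZMod 2)[X])
      = C (a : ZMod 2) * X ^ (a - 1) * (X + 1) ^ b
        + C (b : ZMod 2) * X ^ a * (X + 1) ^ (b - 1) := by
    simp only [derivative_add, derivative_one, derivative_mul, derivative_pow,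
      derivative_X, zero_add, mul_one]
    ring
  have parity : ∀ c : ZMod 2, c = 0 ∨ c = 1 := by decide
  rcases parity a with ha | ha <;> rcases parity b with hb | hb
  · simp [hD, ha, hb] at hne
  · rw [hD, ha, hb, map_zero, map_one, zero_mul, zero_mul, zero_add, one_mul]
    exact mul_dvd_mul_left _ (pow_dvd_pow _ (Nat.sub_le b 1))
  · rw [hD, ha, hb, map_zero, map_one, zero_mul, zero_mul, add_zero, one_mul]
    exact mul_dvd_mul_right (pow_dvd_pow _ (Nat.sub_le a 1)) _
  · obtain ⟨a, rfl⟩ := Nat.exists_eq_add_one_of_ne_zero (n := a) (by rintro rfl; simp at ha)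
    obtain ⟨b, rfl⟩ := Nat.exists_eq_add_one_of_ne_zero (n := b) (by rintro rfl; simp at hb)
    refine ⟨X * (X + 1), ?_⟩
    rw [hD, ha, hb, map_one, Nat.add_sub_cancel, Nat.add_sub_cancel]
    linear_combination
      (-(X ^ a * (X + 1) ^ b * X * (X + 1) * X)) * CharTwo.two_eq_zero (R := (ZMod 2)[X])

theorem sigma_even_pow_odd_squarefree_general (m : ℕ) (M : Polynomial (ZMod 2))
    (hirr : Irreducible M)
    (hM : ∃ a b : ℕ, 1 ≤ a ∧ 1 ≤ b ∧ M = 1 + X ^ a * (X + 1) ^ b) :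
    (IsCoprime (∑ i ∈ Finset.range (2 * m + 1), (X : Polynomial (ZMod 2)) ^ i)
        (X * (X + 1)) ∧
      Squarefree (∑ i ∈ Finset.range (2 * m + 1), (X : Polynomial (ZMod 2)) ^ i)) ∧
    (IsCoprime (∑ i ∈ Finset.range (2 * m + 1), ((X : Polynomial (ZMod 2)) + 1) ^ i)
        (X * (X + 1)) ∧
      Squarefree (∑ i ∈ Finset.range (2 * m + 1), ((X : Polynomial (ZMod 2)) + 1) ^ i)) ∧
    (IsCoprime (∑ i ∈ Finset.range (2 * m + 1), M ^ i) (X * (X + 1)) ∧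
      Squarefree (∑ i ∈ Finset.range (2 * m + 1), M ^ i)) := by
  obtain ⟨a, b, ha, hb, rfl⟩ := hM
  have hX1 : (X + 1 : (ZMod 2)[X]) + 1 = X := by
    rw [add_assoc, CharTwo.add_self_eq_zero, add_zero]
  have hM1 : (1 + X ^ a * (X + 1) ^ b : (ZMod 2)[X]) + 1 = X ^ a * (X + 1) ^ b := by
    rw [add_comm, ← add_assoc, CharTwo.add_self_eq_zero, zero_add]
  refine ⟨isCoprime_and_squarefree_geom_sum_two_mul_add_one m dvd_rfl (by simp),
    isCoprime_and_squarefree_geom_sum_two_mul_add_one m (by rw [hX1, mul_comm]) (by simp),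
    isCoprime_and_squarefree_geom_sum_two_mul_add_one m ?_ ?_⟩
  · rw [hM1]
    exact dvd_mul_of_dvd_right (mul_dvd_mul (dvd_pow_self X (by omega))
      (dvd_pow_self _ (by omega))) _
  · rw [hM1]
    exact dvd_mul_of_dvd_right (derivative_one_add_X_pow_mul_dvd hirr) _

theorem sigma_even_pow_odd_squarefree (m : ℕ) (hm : 1 ≤ m) (M : Polynomial (ZMod 2))
    (hirr : Irreducible M)
    (hM : ∃ a b : ℕ, 1 ≤ a ∧ 1 ≤ b ∧ M = 1 + X ^ a * (X + 1) ^ b) :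
    (IsCoprime (∑ i ∈ Finset.range (2 * m + 1), (X : Polynomial (ZMod 2)) ^ i)
        (X * (X + 1)) ∧
      Squarefree (∑ i ∈ Finset.range (2 * m + 1), (X : Polynomial (ZMod 2)) ^ i)) ∧
    (IsCoprime (∑ i ∈ Finset.range (2 * m + 1), ((X : Polynomial (ZMod 2)) + 1) ^ i)
        (X * (X + 1)) ∧
      Squarefree (∑ i ∈ Finset.range (2 * m + 1), ((X : Polynomial (ZMod 2)) + 1) ^ i)) ∧
    (IsCoprime (∑ i ∈ Finset.range (2 * m + 1), M ^ i) (X * (X + 1)) ∧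
      Squarefree (∑ i ∈ Finset.range (2 * m + 1), M ^ i)) :=
  sigma_even_pow_odd_squarefree_general m M hirr hM
end

section
/- The polynomial 1 + x(x+1)^{2^ν − 1} over F_2 is irreducible if and only if ν ∈ {1, 2}. -/
/-!
Let `N = 2 ^ ν + 1` and `f = 1 + X (X + 1) ^ (2 ^ ν - 1)`. In characteristic 2 the Frobenius
gives `(X - 1) f = X ^ N - 1`, and `N ∣ 2 ^ (2ν) - 1` since `2 ^ ν ≡ -1 [MOD N]`; hence
`f ∣ X ^ 2 ^ (2ν) - X`, so an irreducible `f` has its degree `2 ^ ν` dividing `2ν`,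
forcing `ν ≤ 2`. Conversely, when `N` is prime, `f` is the cyclotomic polynomial `Φ_N`, whose
irreducible factors over `𝔽₂` have degree the order of `2` modulo `N`, namely `2ν`; for
`ν = 1, 2` this is `2 ^ ν`.
-/

open Polynomial

theorem Nat.two_pow_add_one_dvd_two_pow_two_mul_sub_one (n : ℕ) :
    2 ^ n + 1 ∣ 2 ^ (2 * n) - 1 :=
  ⟨2 ^ n - 1, by rw [pow_mul', ← Nat.one_pow 2, Nat.sq_sub_sq, Nat.one_pow]⟩

theorem Nat.le_two_of_two_pow_le_two_mul {n : ℕ} (h : 2 ^ n ≤ 2 * n) : n ≤ 2 := by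
  by_contra! hn
  have h8 : 2 ^ n = 2 ^ (n - 3) * 8 := by rw [← pow_sub_mul_pow 2 hn]; norm_num
  have := Nat.lt_two_pow_self (n := n - 3)
  omega

theorem orderOf_two_zmod_two_pow_add_one {ν : ℕ} (hν : ν ≠ 0) :
    orderOf (2 : ZMod (2 ^ ν + 1)) = 2 * ν := by
  have hpow (d : ℕ) : (2 : ZMod (2 ^ ν + 1)) ^ d = 1 ↔ 2 ^ ν + 1 ∣ 2 ^ d - 1 := by
    rw [← ZMod.natCast_eq_zero_iff, Nat.cast_sub Nat.one_le_two_pow, sub_eq_zero]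
    push_cast
    rfl
  have hdvd : orderOf (2 : ZMod (2 ^ ν + 1)) ∣ 2 * ν :=
    orderOf_dvd_of_pow_eq_one ((hpow _).mpr (Nat.two_pow_add_one_dvd_two_pow_two_mul_sub_one ν))
  have hgt : ν < orderOf (2 : ZMod (2 ^ ν + 1)) := by
    by_contra! hle
    have hpos := Nat.pos_of_dvd_of_pos hdvd (by omega)
    have hN_le := Nat.le_of_dvd (Nat.sub_pos_of_lt (Nat.one_lt_two_pow hpos.ne'))
      ((hpow _).mp (pow_orderOf_eq_one _))
    have hpow_le := Nat.pow_le_pow_right two_pos hle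
    linarith [Nat.sub_le (2 ^ orderOf (2 : ZMod (2 ^ ν + 1))) 1]
  obtain ⟨k, hk⟩ := hdvd
  rcases k with _ | _ | k
  · omega
  · omega
  · nlinarith

section CharTwo

variable {R : Type*} [CommRing R] [CharP R 2]

theorem X_sub_one_mul_one_add_X_mul_X_add_one_pow (ν : ℕ) :
    (X - 1) * (1 + X * (X + 1) ^ (2 ^ ν - 1) : R[X]) = X ^ (2 ^ ν + 1) - 1 := by
  have hfrob : (X + 1 : R[X]) ^ 2 ^ ν = X ^ 2 ^ ν + 1 := by
    simpa using add_pow_char_pow (X : R[X]) 1 2 ν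
  rw [CharTwo.sub_eq_add, CharTwo.sub_eq_add]
  calc (X + 1) * (1 + X * (X + 1) ^ (2 ^ ν - 1) : R[X])
      = X + 1 + X * (X + 1) ^ (2 ^ ν - 1 + 1) := by ring
    _ = X ^ (2 ^ ν + 1) + 1 + (X + X) := by
        rw [Nat.sub_add_cancel Nat.one_le_two_pow, hfrob]; ring
    _ = X ^ (2 ^ ν + 1) + 1 := by rw [CharTwo.add_self_eq_zero, add_zero]

theorem one_add_X_mul_X_add_one_pow_dvd_X_pow_sub_X (ν : ℕ) :
    (1 + X * (X + 1) ^ (2 ^ ν - 1) : R[X]) ∣ X ^ 2 ^ (2 * ν) - X := calc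
  _ ∣ (X ^ (2 ^ ν + 1) - 1 : R[X]) :=
      Dvd.intro_left _ (X_sub_one_mul_one_add_X_mul_X_add_one_pow ν)
  _ ∣ X ^ (2 ^ (2 * ν) - 1) - 1 :=
      dvd_pow_sub_one_of_dvd (Nat.two_pow_add_one_dvd_two_pow_two_mul_sub_one ν)
  _ ∣ X ^ 2 ^ (2 * ν) - X :=
      ⟨X, by rw [sub_mul, one_mul, ← pow_succ, Nat.sub_add_cancel Nat.one_le_two_pow]⟩

theorem one_add_X_mul_X_add_one_pow_eq_cyclotomic [IsDomain R] {ν : ℕ}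
    [Fact (2 ^ ν + 1).Prime] :
    (1 + X * (X + 1) ^ (2 ^ ν - 1) : R[X]) = cyclotomic (2 ^ ν + 1) R := by
  refine mul_left_cancel₀ (X_sub_C_ne_zero 1) ?_
  rw [C_1, X_sub_one_mul_one_add_X_mul_X_add_one_pow, mul_comm, cyclotomic_prime_mul_X_sub_one]

end CharTwo

theorem natDegree_one_add_X_mul_X_add_one_pow {R : Type*} [Semiring R] [Nontrivial R] (k : ℕ) :
    (1 + X * (X + 1) ^ k : R[X]).natDegree = k + 1 := by
  compute_degree! <;> omega

theorem irreducible_one_add_X_mul_X_add_one_pow_of_prime {ν : ℕ} (hN : (2 ^ ν + 1).Prime)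
    (h : 2 ^ ν = 2 * ν) : Irreducible (1 + X * (X + 1) ^ (2 ^ ν - 1) : (ZMod 2)[X]) := by
  have : Fact (2 ^ ν + 1).Prime := ⟨hN⟩
  have hν : ν ≠ 0 := by rintro rfl; simp at h
  have hodd : ¬ 2 ∣ 2 ^ ν + 1 := by
    rw [Nat.dvd_add_right (dvd_pow_self 2 hν)]; norm_num
  rw [one_add_X_mul_X_add_one_pow_eq_cyclotomic]
  refine ZMod.irreducible_of_dvd_cyclotomic_of_natDegree hodd dvd_rfl ?_
  rw [natDegree_cyclotomic, Nat.totient_prime hN, ← orderOf_units, ZMod.coe_unitOfCoprime,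
    Nat.cast_ofNat, orderOf_two_zmod_two_pow_add_one hν, Nat.add_sub_cancel, h]

theorem irreducible_one_add_x_mul_iff (ν : ℕ) (hν : 1 ≤ ν) :
    Irreducible (1 + X * (X + 1) ^ (2 ^ ν - 1) : Polynomial (ZMod 2)) ↔ ν = 1 ∨ ν = 2 := by
  constructor
  · intro hirr
    have hdvd := hirr.natDegree_dvd_of_dvd_X_pow_card_pow_sub_X (n := 2 * ν)
      (by rw [Nat.card_zmod]; exact one_add_X_mul_X_add_one_pow_dvd_X_pow_sub_X ν)
    rw [natDegree_one_add_X_mul_X_add_one_pow, Nat.sub_add_cancel Nat.one_le_two_pow] at hdvd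
    have := Nat.le_two_of_two_pow_le_two_mul (Nat.le_of_dvd (by omega) hdvd)
    omega
  · rintro (rfl | rfl)
    · exact irreducible_one_add_X_mul_X_add_one_pow_of_prime (by norm_num) (by norm_num)
    · exact irreducible_one_add_X_mul_X_add_one_pow_of_prime (by norm_num) (by norm_num)
end

section
/- For every n ≥ 1, the polynomial x^{2^n − 1}(x+1)^{2^n − 1} over F_2 is bi-unitary perfect: σ**(x^{2^n−1}(x+1)^{2^n−1}) = x^{2^n−1}(x+1)^{2^n−1}. Also x^2(x+1)^2 is bi-unitary perfect. -/
/-!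
Since `X` and `X + 1` are distinct monic irreducibles, `σ**(X^a (X+1)^a) = σ**(X^a) σ**((X+1)^a)`.
For odd `a = 2^n - 1` we have `σ**(T^a) = 1 + T + ⋯ + T^{2^n-1} = (1+T)^{2^n-1}` in
characteristic 2 (the geometric sum doubles via Frobenius), and `σ**(T^2) = (1+T)^2`. In both
cases `σ**` sends `X^a` to `(X+1)^a` and `(X+1)^a` to `X^a`, so the product is fixed.
-/

open Polynomial

namespace Polynomial

theorem irreducible_X_add_one_zmod_two : Irreducible (X + 1 : (ZMod 2)[X]) := by
  simpa [CharTwo.sub_eq_add] using irreducible_X_sub_C (1 : ZMod 2)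

theorem X_add_one_add_one_of_charTwo {R : Type*} [Ring R] [CharP R 2] : (X + 1 + 1 : R[X]) = X := by
  rw [add_assoc, CharTwo.add_self_eq_zero, add_zero]

theorem normalizedFactors_pow_mul_pow {K : Type*} [Field K] [DecidableEq K] {P Q : K[X]} (hP : Irreducible P)
    (hQ : Irreducible Q) (hPm : P.Monic) (hQm : Q.Monic) (a b : ℕ) :
    UniqueFactorizationMonoid.normalizedFactors (P ^ a * Q ^ b) =
      Multiset.replicate a P + Multiset.replicate b Q := by
  rw [UniqueFactorizationMonoid.normalizedFactors_mul (pow_ne_zero _ hP.ne_zero)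
      (pow_ne_zero _ hQ.ne_zero),
    UniqueFactorizationMonoid.normalizedFactors_pow,
    UniqueFactorizationMonoid.normalizedFactors_pow,
    UniqueFactorizationMonoid.normalizedFactors_irreducible hP,
    UniqueFactorizationMonoid.normalizedFactors_irreducible hQ,
    hPm.normalize_eq_self, hQm.normalize_eq_self,
    Multiset.nsmul_singleton, Multiset.nsmul_singleton]

end Polynomial

open Polynomial

@[simp]
theorem sigmaStarStarPow_zero (T : (ZMod 2)[X]) : sigmaStarStarPow T 0 = 1 := by
  simp [sigmaStarStarPow]

theorem sigmaStarStarPow_two (T : (ZMod 2)[X]) : sigmaStarStarPow T 2 = (1 + T) ^ 2 := by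
  simp [sigmaStarStarPow, sq, add_comm]

theorem geom_sum_range_two_pow {R : Type*} [CommSemiring R] [CharP R 2] (T : R) (n : ℕ) :
    ∑ i ∈ Finset.range (2 ^ n), T ^ i = (T + 1) ^ (2 ^ n - 1) := by
  induction n with
  | zero => simp
  | succ n ih =>
    have hexp : 2 ^ (n + 1) - 1 = 2 ^ n + (2 ^ n - 1) := by
      have := Nat.one_le_two_pow (n := n)
      rw [pow_succ]; omega
    have hfrob : 1 + T ^ 2 ^ n = (T + 1) ^ 2 ^ n := by
      rw [add_pow_char_pow, one_pow, add_comm]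
    calc ∑ i ∈ Finset.range (2 ^ (n + 1)), T ^ i
        = (1 + T ^ 2 ^ n) * ∑ i ∈ Finset.range (2 ^ n), T ^ i := by
          rw [pow_succ, mul_two, Finset.sum_range_add, add_mul, one_mul, Finset.mul_sum]
          simp only [pow_add]
      _ = (T + 1) ^ (2 ^ (n + 1) - 1) := by
          rw [ih, hfrob, ← pow_add, hexp]

theorem sigmaStarStarPow_two_pow_sub_one (T : (ZMod 2)[X]) {n : ℕ} (hn : n ≠ 0) :
    sigmaStarStarPow T (2 ^ n - 1) = (T + 1) ^ (2 ^ n - 1) := by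
  have h1 : 1 ≤ 2 ^ n := Nat.one_le_two_pow
  have hodd : ¬ Even (2 ^ n - 1) := by
    simp [Nat.even_sub h1, Nat.even_pow, hn]
  have hne : 2 ^ n - 1 ≠ 0 := by
    have := Nat.one_lt_two_pow hn
    omega
  rw [sigmaStarStarPow, if_neg hne, if_neg hodd, Nat.sub_add_cancel h1, geom_sum_range_two_pow]

theorem sigmaStarStar_pow_mul_pow {P Q : (ZMod 2)[X]} (hP : Irreducible P) (hQ : Irreducible Q)
    (hPm : P.Monic) (hQm : Q.Monic) (hPQ : P ≠ Q) (a b : ℕ) :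
    sigmaStarStar (P ^ a * Q ^ b) = sigmaStarStarPow P a * sigmaStarStarPow Q b := by
  classical
  have hsub : (Multiset.replicate a P + Multiset.replicate b Q).toFinset ⊆ {P, Q} := fun p hp => by
    simp only [Multiset.mem_toFinset, Multiset.mem_add, Multiset.mem_replicate] at hp
    rcases hp with ⟨-, rfl⟩ | ⟨-, rfl⟩ <;> simp
  rw [sigmaStarStar, normalizedFactors_pow_mul_pow hP hQ hPm hQm, Finset.prod_subset hsub,
    Finset.prod_pair hPQ]
  · simp [Multiset.count_replicate, hPQ, hPQ.symm]
  · intro p _ hp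
    rw [Multiset.count_eq_zero_of_notMem (Multiset.mem_toFinset.not.mp hp), sigmaStarStarPow_zero]

theorem biunitary_perfect_two_factors :
    (∀ n : ℕ, 1 ≤ n →
      sigmaStarStar (X ^ (2 ^ n - 1) * (X + 1) ^ (2 ^ n - 1)) =
        (X : Polynomial (ZMod 2)) ^ (2 ^ n - 1) * (X + 1) ^ (2 ^ n - 1)) ∧
    sigmaStarStar (X ^ 2 * (X + 1) ^ 2) = (X : Polynomial (ZMod 2)) ^ 2 * (X + 1) ^ 2 := by
  have hσ (a : ℕ) : sigmaStarStar (X ^ a * (X + 1) ^ a) =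
      sigmaStarStarPow X a * sigmaStarStarPow (X + 1) a :=
    sigmaStarStar_pow_mul_pow irreducible_X irreducible_X_add_one_zmod_two monic_X
      (monic_X_add_C 1) (left_ne_add.mpr one_ne_zero) a a
  refine ⟨fun n hn => ?_, ?_⟩
  · rw [hσ, sigmaStarStarPow_two_pow_sub_one _ (by omega),
      sigmaStarStarPow_two_pow_sub_one _ (by omega), X_add_one_add_one_of_charTwo, mul_comm]
  · rw [hσ, sigmaStarStarPow_two, sigmaStarStarPow_two, add_comm 1 X, add_comm 1 (X + 1),
      X_add_one_add_one_of_charTwo, mul_comm]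
end

section
/- Let P = 1+x+x^2+x^3+x^4 ∈ F_2[x] and Q = 1 + x^5(x+1)^{2^ν−1}P^{2^ν−1} for ν ≥ 1. Then Q is irreducible over F_2 if and only if ν = 2. -/
/-!
Since `(X + 1) * P = X ^ 5 + 1` and `(X ^ 5 + 1) ^ (2 ^ ν) = X ^ (5 * 2 ^ ν) + 1` in
characteristic 2, `Q * (X ^ 5 - 1) = X ^ (5 * m) - 1` with `m = 2 ^ ν + 1`. A prime `Q`
then divides `X ^ m - 1` or `(X ^ (5 * m) - 1) / (X ^ m - 1)`, and comparing degrees forces `m ≤ 5`.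
The case `ν = 1` has an explicit factorization, and for `ν = 2` the polynomial `Q` is the
cyclotomic polynomial `Φ₂₅`, irreducible over `𝔽₂` because `2` has order `φ 25 = 20`
modulo `25`.
-/

open Polynomial

theorem CharTwo.one_add_mul_add_one_pow_mul_add_one {R : Type*} [CommRing R] [CharP R 2]
    (y : R) (ν : ℕ) :
    (1 + y * (y + 1) ^ (2 ^ ν - 1)) * (y + 1) = y ^ (2 ^ ν + 1) + 1 := by
  have hpow : (y + 1) ^ (2 ^ ν - 1) * (y + 1) = y ^ 2 ^ ν + 1 := by
    rw [← pow_succ, Nat.sub_add_cancel Nat.one_le_two_pow, add_pow_char_pow, one_pow]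
  linear_combination y * hpow + y * CharTwo.two_eq_zero (R := R)

theorem natDegree_X_pow_sub_one {R : Type*} [CommRing R] [Nontrivial R] (n : ℕ) :
    (X ^ n - 1 : R[X]).natDegree = n := by
  simpa using natDegree_X_pow_sub_C (n := n) (r := (1 : R))

theorem X_pow_sub_one_ne_zero {R : Type*} [CommRing R] [Nontrivial R] {n : ℕ} (hn : 0 < n) :
    (X ^ n - 1 : R[X]) ≠ 0 := by
  simpa using X_pow_sub_C_ne_zero hn (1 : R)

theorem le_of_prime_of_mul_X_pow_sub_one_eq {K : Type*} [Field K] {q : K[X]} {a m : ℕ}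
    (hq : Prime q) (ha : 2 ≤ a) (h : q * (X ^ a - 1) = X ^ (a * m) - 1) : m ≤ a := by
  have hXa : (X ^ a - 1 : K[X]) ≠ 0 := X_pow_sub_one_ne_zero (by omega)
  have hm : m ≠ 0 := by
    rintro rfl
    simp only [mul_zero, pow_zero, sub_self, mul_eq_zero] at h
    exact h.elim hq.ne_zero hXa
  obtain ⟨u, hu⟩ : X ^ m - 1 ∣ (X ^ (a * m) - 1 : K[X]) := by
    simpa [← pow_mul, mul_comm] using sub_dvd_pow_sub_pow (X ^ m : K[X]) 1 a
  have hXm : (X ^ m - 1 : K[X]) ≠ 0 := X_pow_sub_one_ne_zero (by omega)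
  have hu0 : u ≠ 0 := by
    rintro rfl
    rw [mul_zero, ← h] at hu
    exact mul_ne_zero hq.ne_zero hXa hu
  have hdeg_q : q.natDegree + a = a * m := by
    simpa only [natDegree_mul hq.ne_zero hXa, natDegree_X_pow_sub_one] using congrArg natDegree h
  have hdeg_u : m + u.natDegree = a * m := by
    simpa only [natDegree_mul hXm hu0, natDegree_X_pow_sub_one] using congrArg natDegree hu.symm
  rcases hq.dvd_or_dvd (hu ▸ h ▸ dvd_mul_right q _) with hdvd | hdvd
  · have := natDegree_le_of_dvd hdvd hXm
    rw [natDegree_X_pow_sub_one] at this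
    nlinarith
  · have := natDegree_le_of_dvd hdvd hu0
    nlinarith

noncomputable def Q (ν : ℕ) : (ZMod 2)[X] :=
  1 + X ^ 5 * (X + 1) ^ (2 ^ ν - 1) * (1 + X + X ^ 2 + X ^ 3 + X ^ 4) ^ (2 ^ ν - 1)

theorem Q_mul_X_pow_five_sub_one (ν : ℕ) :
    Q ν * (X ^ 5 - 1) = X ^ (5 * (2 ^ ν + 1)) - 1 := by
  have hP : ((X : (ZMod 2)[X]) + 1) * (1 + X + X ^ 2 + X ^ 3 + X ^ 4) = X ^ 5 + 1 := by
    linear_combination (X + X ^ 2 + X ^ 3 + X ^ 4) * CharTwo.two_eq_zero (R := (ZMod 2)[X])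
  rw [Q, mul_assoc, ← mul_pow, hP, CharTwo.sub_eq_add, CharTwo.sub_eq_add, pow_mul,
    CharTwo.one_add_mul_add_one_pow_mul_add_one]

theorem Q_one_eq : Q 1 = (X ^ 2 + X + 1) * (1 + X + X ^ 3 + X ^ 4 + X ^ 5 + X ^ 7 + X ^ 8) := by
  simp only [Q, pow_one, Nat.add_one_sub_one]
  linear_combination -(X + X ^ 2 + X ^ 3 + X ^ 4 + X ^ 5) * CharTwo.two_eq_zero (R := (ZMod 2)[X])

theorem not_irreducible_Q_one : ¬ Irreducible (Q 1) := by
  rw [Q_one_eq]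
  intro h
  rcases h.isUnit_or_isUnit rfl with h | h
  · refine not_isUnit_of_natDegree_pos _ ?_ h
    rw [show natDegree (X ^ 2 + X + 1 : (ZMod 2)[X]) = 2 by compute_degree!]
    norm_num
  · refine not_isUnit_of_natDegree_pos _ ?_ h
    rw [show natDegree (1 + X + X ^ 3 + X ^ 4 + X ^ 5 + X ^ 7 + X ^ 8 : (ZMod 2)[X]) = 8 by
      compute_degree!]
    norm_num

theorem Q_two_eq_cyclotomic : Q 2 = cyclotomic 25 (ZMod 2) := by
  have : Fact (Nat.Prime 5) := ⟨by norm_num⟩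
  have h := cyclotomic_prime_pow_mul_X_pow_sub_one (ZMod 2) 5 1
  have h' := Q_mul_X_pow_five_sub_one 2
  simp only [pow_one, Nat.reducePow, Nat.reduceAdd, Nat.reduceMul] at h h'
  exact mul_right_cancel₀ (X_pow_sub_one_ne_zero (by norm_num)) (h'.trans h.symm)

theorem irreducible_cyclotomic_twentyfive : Irreducible (cyclotomic 25 (ZMod 2)) := by
  have : Fact (Nat.Prime 2) := ⟨Nat.prime_two⟩
  refine ZMod.irreducible_of_dvd_cyclotomic_of_natDegree (by norm_num) dvd_rfl ?_
  rw [natDegree_cyclotomic, eq_comm, orderOf_eq_iff (by norm_num)]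
  refine ⟨ZMod.pow_totient _, ?_⟩
  rw [show Nat.totient 25 = 20 by decide]
  decide

theorem irreducible_Q_iff (ν : ℕ) (hν : 1 ≤ ν) :
    Irreducible (1 + X ^ 5 * (X + 1) ^ (2 ^ ν - 1) *
        (1 + X + X ^ 2 + X ^ 3 + X ^ 4 : Polynomial (ZMod 2)) ^ (2 ^ ν - 1)) ↔ ν = 2 := by
  change Irreducible (Q ν) ↔ ν = 2
  constructor
  · intro hQ
    obtain rfl | hν1 := eq_or_ne ν 1
    · exact absurd hQ not_irreducible_Q_one
    have hm : 2 ^ ν + 1 ≤ 5 :=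
      le_of_prime_of_mul_X_pow_sub_one_eq hQ.prime (by norm_num) (Q_mul_X_pow_five_sub_one ν)
    have : ν ≤ 2 := (Nat.pow_le_pow_iff_right (by norm_num)).1 (show 2 ^ ν ≤ 2 ^ 2 by omega)
    omega
  · rintro rfl
    rw [Q_two_eq_cyclotomic]
    exact irreducible_cyclotomic_twentyfive
end
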